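/- Let F be a partner-hereditary family of bipartite graphs and let F' be the union of all size-identifiable partner-hereditary families fully contained in F. Then F-branchwidth and F'-branchwidth are asymptotically equivalent: there is a function g (depending on F) such that for every graph G, F'-bw(G) ≤ F-bw(G) ≤ g(F'-bw(G)). In particular, one may take g(k) = R(2n, 2n, 2n, 2n) with n = 1 + max(q, k), where q is the largest half-order of a graph in F − F' isomorphic to one of the six canonical graphs (edgeless, matching, chain, strict chain, anti-matching, complete bipartite) of that order. -/
import Mathlib


/-- A bipartite graph with ordered paired parts is encoded by the relation
`R i j` meaning `a_i ~ b_j`; a family contains, per size, a set of these. -/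
abbrev BipFamily : Type := ∀ n : ℕ, Set (Fin n → Fin n → Prop)

/-- Isomorphism of bipartite graphs with paired parts. -/
def BipIso {n : ℕ} (R R' : Fin n → Fin n → Prop) : Prop :=
  ∃ σ : Equiv.Perm (Fin n),
    (∀ i j, R i j ↔ R' (σ i) (σ j)) ∨ (∀ i j, R i j ↔ R' (σ j) (σ i))

/-- Partner-hereditary family. -/
def PartnerHereditary (F : BipFamily) : Prop :=
  ∀ n, ∀ R ∈ F n, ∀ m, ∀ f : Fin m ↪o Fin n,
    ∃ R' ∈ F m, BipIso R' (fun i j => R (f i) (f j))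

/-- Size-identifiable family: exactly one graph of each order up to iso. -/
def SizeIdentifiable (F : BipFamily) : Prop :=
  ∀ n, ∃ R ∈ F n, ∀ R' ∈ F n, BipIso R R'

/-- `R` is isomorphic to one of the six canonical graphs of its order:
edgeless, matching, chain, strict chain, anti-matching, complete. -/
def IsCanonical {n : ℕ} (R : Fin n → Fin n → Prop) : Prop :=
  BipIso R (fun _ _ => False) ∨ BipIso R (fun i j => i = j) ∨
  BipIso R (fun i j => i ≤ j) ∨ BipIso R (fun i j => i < j) ∨
  BipIso R (fun i j => i ≠ j) ∨ BipIso R (fun _ _ => True)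

/-- The union `F'` of all size-identifiable partner-hereditary families
fully contained in `F`. -/
def siSub (F : BipFamily) : BipFamily := fun n =>
  {R | ∃ Fs : BipFamily, PartnerHereditary Fs ∧ SizeIdentifiable Fs ∧
        (∀ m, Fs m ⊆ F m) ∧ R ∈ Fs n}

/-- `q`: the largest half-order of a graph of `F − F'` isomorphic to one of
the six canonical graphs of that order. -/
noncomputable def qOf (F : BipFamily) : ℕ :=
  sSup {m : ℕ | ∃ R ∈ F m, R ∉ siSub F m ∧ IsCanonical R}

/-- Four-colour Ramsey property and Ramsey number `R(s,s,s,s)`. -/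
def HasRamsey4 (s R : ℕ) : Prop :=
  ∀ c : Fin R → Fin R → Fin 4, (∀ i j, c i j = c j i) →
    ∃ (k : Fin 4) (S : Finset (Fin R)), S.card = s ∧
      ∀ i ∈ S, ∀ j ∈ S, i ≠ j → c i j = k

noncomputable def ramsey4 (s : ℕ) : ℕ := sInf {R | HasRamsey4 s R}

/-- `CutHas G X Y n R`: the cut `G[X,Y]` contains an induced copy of `R`. -/
def CutHas {V : Type*} (G : SimpleGraph V) (X Y : Set V) (n : ℕ)
    (R : Fin n → Fin n → Prop) : Prop :=
  ∃ a b : Fin n → V, Function.Injective a ∧ Function.Injective b ∧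
    (∀ i, a i ∈ X) ∧ (∀ i, b i ∈ Y) ∧ (∀ i j, G.Adj (a i) (b j) ↔ R i j)

/-- The cut `G[X,Y]` contains a `2n`-vertex member of the family `F`. -/
def FamHas (F : BipFamily) {V : Type*} (G : SimpleGraph V) (X Y : Set V)
    (n : ℕ) : Prop :=
  ∃ R ∈ F n, CutHas G X Y n R ∨ CutHas G Y X n R

/-- A branch decomposition of the induced subgraph on a vertex set `S`. -/
structure BranchDecompOn {V : Type*} (S : Set V) where
  N : Type
  T : SimpleGraph N
  tree : T.IsTree
  subcubic : ∀ b : N, (T.neighborSet b).ncard ≤ 3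
  leaf : S → N
  leaf_inj : Function.Injective leaf
  leaf_iff : ∀ b : N, (T.neighborSet b).ncard ≤ 1 ↔ ∃ v, leaf v = b

/-- The side of the bipartition of `S` induced by the tree edge `{u,v}`. -/
def BranchDecompOn.side {V : Type*} {S : Set V} (D : BranchDecompOn S)
    (u v : D.N) : Set V :=
  {x | ∃ h : x ∈ S, (D.T.deleteEdges {s(u, v)}).Reachable u (D.leaf ⟨x, h⟩)}

/-- `F`-branchwidth of the induced subgraph on `S` is at most `k`. -/
def FamBwLE (F : BipFamily) {V : Type*} (G : SimpleGraph V) (S : Set V)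
    (k : ℕ) : Prop :=
  ∃ D : BranchDecompOn S, ∀ u v : D.N, D.T.Adj u v →
    ∀ n, FamHas F G (D.side u v) (S \ D.side u v) n → n ≤ k

/-- The `F`-branchwidth of `G` (on the vertex set `S`). -/
noncomputable def FamBw (F : BipFamily) {V : Type*} (G : SimpleGraph V)
    (S : Set V) : ℕ :=
  sInf {k | FamBwLE F G S k}


lemma BipIso.of_iff {n} {R R' : Fin n → Fin n → Prop} (h : ∀ i j, R i j ↔ R' i j) :
    BipIso R R' := ⟨1, Or.inl fun i j => h i j⟩

lemma BipIso.of_iff_swap {n} {R R' : Fin n → Fin n → Prop} (h : ∀ i j, R i j ↔ R' j i) :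
    BipIso R R' := ⟨1, Or.inr fun i j => h i j⟩

lemma BipIso.rfl {n} (R : Fin n → Fin n → Prop) : BipIso R R := .of_iff fun _ _ => Iff.rfl

lemma BipIso.symm {n} {R R' : Fin n → Fin n → Prop} (h : BipIso R R') : BipIso R' R := by
  obtain ⟨σ, h | h⟩ := h
  · exact ⟨σ⁻¹, Or.inl fun i j => by simpa using (h (σ⁻¹ i) (σ⁻¹ j)).symm⟩
  · exact ⟨σ⁻¹, Or.inr fun i j => by simpa using (h (σ⁻¹ j) (σ⁻¹ i)).symm⟩

lemma BipIso.trans {n} {R R' R'' : Fin n → Fin n → Prop}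
    (h1 : BipIso R R') (h2 : BipIso R' R'') : BipIso R R'' := by
  obtain ⟨σ, h1 | h1⟩ := h1 <;> obtain ⟨τ, h2 | h2⟩ := h2
  · exact ⟨σ.trans τ, Or.inl fun i j => (h1 i j).trans (h2 _ _)⟩
  · exact ⟨σ.trans τ, Or.inr fun i j => (h1 i j).trans (h2 _ _)⟩
  · exact ⟨σ.trans τ, Or.inr fun i j => (h1 i j).trans (h2 _ _)⟩
  · exact ⟨σ.trans τ, Or.inl fun i j => (h1 i j).trans (h2 _ _)⟩

def pat (t : Fin 6) (n : ℕ) (i j : Fin n) : Prop :=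
  if t.val = 0 then False else if t.val = 1 then i = j else if t.val = 2 then i ≤ j
  else if t.val = 3 then i < j else if t.val = 4 then i ≠ j else True

lemma pat_restrict (t : Fin 6) {m n : ℕ} (f : Fin m ↪o Fin n) (i j : Fin m) :
    pat t n (f i) (f j) ↔ pat t m i j := by
  unfold pat
  split_ifs <;>
    simp [f.le_iff_le, f.lt_iff_lt, f.injective.eq_iff, f.injective.ne_iff]

lemma isCanonical_iff {n} (R : Fin n → Fin n → Prop) :
    IsCanonical R ↔ ∃ t : Fin 6, BipIso R (pat t n) := by
  constructor
  · rintro (h | h | h | h | h | h)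
    · exact ⟨0, h.trans (.of_iff fun i j => Iff.rfl)⟩
    · exact ⟨1, h.trans (.of_iff fun i j => Iff.rfl)⟩
    · exact ⟨2, h.trans (.of_iff fun i j => Iff.rfl)⟩
    · exact ⟨3, h.trans (.of_iff fun i j => Iff.rfl)⟩
    · exact ⟨4, h.trans (.of_iff fun i j => Iff.rfl)⟩
    · exact ⟨5, h.trans (.of_iff fun i j => Iff.rfl)⟩
  · rintro ⟨t, h⟩
    fin_cases t
    · exact Or.inl (h.trans (.of_iff fun i j => Iff.rfl))
    · exact Or.inr <| Or.inl (h.trans (.of_iff fun i j => Iff.rfl))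
    · exact Or.inr <| Or.inr <| Or.inl (h.trans (.of_iff fun i j => Iff.rfl))
    · exact Or.inr <| Or.inr <| Or.inr <| Or.inl (h.trans (.of_iff fun i j => Iff.rfl))
    · exact Or.inr <| Or.inr <| Or.inr <| Or.inr <| Or.inl (h.trans (.of_iff fun i j => Iff.rfl))
    · exact Or.inr <| Or.inr <| Or.inr <| Or.inr <| Or.inr (h.trans (.of_iff fun i j => Iff.rfl))

lemma restrict_iso {n m} {R R' : Fin n → Fin n → Prop} (h : BipIso R R') (f : Fin m ↪o Fin n) :
    ∃ g : Fin m ↪o Fin n, BipIso (fun i j => R (f i) (f j)) (fun i j => R' (g i) (g j)) := by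
  obtain ⟨σ, hσ⟩ := h
  have hinj : Function.Injective (fun i => σ (f i)) := σ.injective.comp f.injective
  set T : Finset (Fin n) := Finset.image (fun i => σ (f i)) Finset.univ with hT
  have hcard : T.card = m := by
    rw [hT, Finset.card_image_of_injective _ hinj, Finset.card_univ, Fintype.card_fin]
  refine ⟨T.orderEmbOfFin hcard, ?_⟩
  have hmem : ∀ i, σ (f i) ∈ T := fun i => Finset.mem_image_of_mem _ (Finset.mem_univ i)
  set u : Fin m → Fin m := fun i => (T.orderIsoOfFin hcard).symm ⟨σ (f i), hmem i⟩ with hu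
  have huinj : Function.Injective u := by
    intro a b hab
    have h2 := congrArg (fun x => ((T.orderIsoOfFin hcard) x : Fin n)) hab
    simp only [hu, OrderIso.apply_symm_apply] at h2
    exact hinj h2
  have hgu : ∀ i, T.orderEmbOfFin hcard (u i) = σ (f i) := by
    intro i
    rw [← Finset.coe_orderIsoOfFin_apply, hu]
    simp
  obtain ⟨τ, hτ⟩ : ∃ τ : Equiv.Perm (Fin m), ∀ i, τ i = u i :=
    ⟨Equiv.ofBijective u (Finite.injective_iff_bijective.mp huinj), fun _ => rfl⟩
  rcases hσ with hσ | hσ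
  · exact ⟨τ, Or.inl fun i j => by simp only [hτ, hgu]; exact hσ (f i) (f j)⟩
  · exact ⟨τ, Or.inr fun i j => by simp only [hτ, hgu]; exact hσ (f i) (f j)⟩

lemma restrict_pat {n m} {R : Fin n → Fin n → Prop} {t : Fin 6}
    (h : BipIso R (pat t n)) (f : Fin m ↪o Fin n) :
    BipIso (fun i j => R (f i) (f j)) (pat t m) := by
  obtain ⟨g, hg⟩ := restrict_iso h f
  exact hg.trans (.of_iff fun i j => pat_restrict t g i j)


/-- Quota version of the 4-colour Ramsey theorem for pairs. -/
lemma ramsey_exists : ∀ (n : ℕ) (q : Fin 4 → ℕ), (∑ k, q k) ≤ n →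
    ∃ N : ℕ, ∀ c : Fin N → Fin N → Fin 4, (∀ i j, c i j = c j i) →
      ∃ (k : Fin 4) (S : Finset (Fin N)), S.card = q k ∧
        ∀ i ∈ S, ∀ j ∈ S, i ≠ j → c i j = k := by
  intro n
  induction n with
  | zero =>
    intro q hq
    have h0 : q 0 = 0 := by
      have := Finset.single_le_sum (f := q) (fun k _ => Nat.zero_le _) (Finset.mem_univ 0)
      omega
    exact ⟨0, fun c _ => ⟨0, ∅, by simp [h0], by simp⟩⟩
  | succ n ih =>
    intro q hq
    by_cases h0 : ∃ k, q k = 0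
    · obtain ⟨k, hk⟩ := h0
      exact ⟨0, fun c _ => ⟨k, ∅, by simp [hk], by simp⟩⟩
    push_neg at h0
    have hpos : ∀ k, 1 ≤ q k := fun k => Nat.one_le_iff_ne_zero.mpr (h0 k)
    -- recursively obtained Ramsey numbers for decremented quotas
    have hN : ∀ k : Fin 4, ∃ N : ℕ, ∀ c : Fin N → Fin N → Fin 4, (∀ i j, c i j = c j i) →
        ∃ (k' : Fin 4) (S : Finset (Fin N)), S.card = Function.update q k (q k - 1) k' ∧
          ∀ i ∈ S, ∀ j ∈ S, i ≠ j → c i j = k' := by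
      intro k
      apply ih
      have : ∑ k', Function.update q k (q k - 1) k' = (∑ k', q k') - 1 := by
        rw [Finset.sum_update_of_mem (Finset.mem_univ k)]
        have h1 : (∑ k' ∈ Finset.univ \ {k}, q k') + q k = ∑ k', q k' := by
          rw [add_comm, ← Finset.sum_eq_add_sum_sdiff_singleton_of_mem (Finset.mem_univ k)]
        have h2 := hpos k
        omega
      have hsum : 1 ≤ ∑ k', q k' := le_trans (hpos 0)
        (Finset.single_le_sum (fun k _ => Nat.zero_le _) (Finset.mem_univ 0))
      rw [this]
      omega
    choose N hNspec using hN
    refine ⟨1 + ∑ k, N k, ?_⟩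
    intro c hc
    have hv : 0 < 1 + ∑ k, N k := by omega
    set v : Fin (1 + ∑ k, N k) := ⟨0, hv⟩ with hvdef
    set W : Finset (Fin (1 + ∑ k, N k)) := Finset.univ.erase v with hW
    have hWcard : W.card = ∑ k, N k := by
      rw [hW, Finset.card_erase_of_mem (Finset.mem_univ v)]
      simp
    have hsplit : W.card = ∑ k, (W.filter (fun x => c v x = k)).card :=
      Finset.card_eq_sum_card_fiberwise (fun x _ => Finset.mem_univ (c v x))
    have hex : ∃ k, N k ≤ (W.filter (fun x => c v x = k)).card := by
      by_contra hcon
      push_neg at hcon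
      have := Finset.sum_lt_sum_of_nonempty (s := (Finset.univ : Finset (Fin 4)))
        Finset.univ_nonempty (fun k _ => hcon k)
      omega
    obtain ⟨k, hk⟩ := hex
    obtain ⟨B, hBsub, hBcard⟩ := Finset.exists_subset_card_eq hk
    set g := B.orderEmbOfFin hBcard with hg
    have hgB : ∀ i, g i ∈ B := fun i => Finset.orderEmbOfFin_mem B hBcard i
    have hgW : ∀ i, c v (g i) = k := fun i => (Finset.mem_filter.mp (hBsub (hgB i))).2
    have hgne : ∀ i, g i ≠ v := fun i =>
      Finset.ne_of_mem_erase (Finset.mem_filter.mp (hBsub (hgB i))).1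
    obtain ⟨k', S', hS'card, hS'mono⟩ := hNspec k (fun i j => c (g i) (g j))
      (fun i j => by exact hc (g i) (g j))
    by_cases hkk : k' = k
    · subst hkk
      refine ⟨k', insert v (S'.map g.toEmbedding), ?_, ?_⟩
      · rw [Finset.card_insert_of_notMem, Finset.card_map, hS'card,
          Function.update_self]
        · have := hpos k'; omega
        · simp only [Finset.mem_map]
          rintro ⟨a, _, ha⟩
          exact hgne a ha
      · intro i hi j hj hij
        rcases Finset.mem_insert.mp hi with hi | hi <;>
          rcases Finset.mem_insert.mp hj with hj | hj
        · exact absurd (hi.trans hj.symm) hij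
        · obtain ⟨b, _, hb⟩ := Finset.mem_map.mp hj
          rw [hi, ← hb]; exact hgW b
        · obtain ⟨a, _, ha⟩ := Finset.mem_map.mp hi
          rw [hj, ← ha, hc]; exact hgW a
        · obtain ⟨a, haS, ha⟩ := Finset.mem_map.mp hi
          obtain ⟨b, hbS, hb⟩ := Finset.mem_map.mp hj
          rw [← ha, ← hb]
          exact hS'mono a haS b hbS (by rintro rfl; rw [ha] at hb; exact hij (hb ▸ rfl))
    · refine ⟨k', S'.map g.toEmbedding, ?_, ?_⟩
      · rw [Finset.card_map, hS'card, Function.update_of_ne hkk]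
      · intro i hi j hj hij
        obtain ⟨a, haS, ha⟩ := Finset.mem_map.mp hi
        obtain ⟨b, hbS, hb⟩ := Finset.mem_map.mp hj
        rw [← ha, ← hb]
        exact hS'mono a haS b hbS (by rintro rfl; rw [ha] at hb; exact hij (hb ▸ rfl))

lemma hasRamsey4_mono {s R R' : ℕ} (h : HasRamsey4 s R) (hle : R ≤ R') : HasRamsey4 s R' := by
  intro c hc
  obtain ⟨k, S, hcard, hmono⟩ := h (fun i j => c (Fin.castLE hle i) (Fin.castLE hle j))
    (fun i j => hc _ _)
  refine ⟨k, S.map (Fin.castLEEmb hle), by simp [hcard], ?_⟩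
  intro i hi j hj hij
  obtain ⟨a, haS, ha⟩ := Finset.mem_map.mp hi
  obtain ⟨b, hbS, hb⟩ := Finset.mem_map.mp hj
  rw [← ha, ← hb]
  exact hmono a haS b hbS (by rintro rfl; rw [ha] at hb; exact hij (hb ▸ rfl))

lemma hasRamsey4_of_le {s m : ℕ} (h : ramsey4 s ≤ m) : HasRamsey4 s m := by
  have hne : {R | HasRamsey4 s R}.Nonempty := by
    obtain ⟨N, hN⟩ := ramsey_exists (∑ _k : Fin 4, s) (fun _ => s) le_rfl
    exact ⟨N, fun c hc => hN c hc⟩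
  exact hasRamsey4_mono (Nat.sInf_mem hne) h

/-! ### Auxiliary lemmas about `CutHas`, `siSub`, `occF`, `qOf` -/

lemma CutHas.restrict {V : Type*} {G : SimpleGraph V} {X Y : Set V} {n m : ℕ}
    {R : Fin n → Fin n → Prop} (h : CutHas G X Y n R) (g : Fin m → Fin n)
    (hg : Function.Injective g) : CutHas G X Y m (fun i j => R (g i) (g j)) := by
  obtain ⟨a, b, ha, hb, haX, hbY, hadj⟩ := h
  exact ⟨a ∘ g, b ∘ g, ha.comp hg, hb.comp hg, fun i => haX _, fun i => hbY _,
    fun i j => hadj _ _⟩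

lemma CutHas.of_iso {V : Type*} {G : SimpleGraph V} {X Y : Set V} {n : ℕ}
    {R R' : Fin n → Fin n → Prop} (hiso : BipIso R R') (h : CutHas G X Y n R') :
    CutHas G X Y n R ∨ CutHas G Y X n R := by
  obtain ⟨a, b, ha, hb, haX, hbY, hadj⟩ := h
  obtain ⟨σ, hσ | hσ⟩ := hiso
  · exact Or.inl ⟨a ∘ σ, b ∘ σ, ha.comp σ.injective, hb.comp σ.injective,
      fun i => haX _, fun i => hbY _, fun i j => (hadj _ _).trans (hσ i j).symm⟩
  · refine Or.inr ⟨b ∘ σ, a ∘ σ, hb.comp σ.injective, ha.comp σ.injective,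
      fun i => hbY _, fun i => haX _, fun i j => ?_⟩
    rw [SimpleGraph.adj_comm]
    exact (hadj _ _).trans (hσ i j).symm

lemma siSub_subset (F : BipFamily) (n : ℕ) : siSub F n ⊆ F n := by
  rintro R ⟨Fs, _, _, hs, hm⟩; exact hs n hm

lemma pat0 {n : ℕ} (i j : Fin n) : pat 0 n i j ↔ False := Iff.rfl
lemma pat1 {n : ℕ} (i j : Fin n) : pat 1 n i j ↔ (i = j) := Iff.rfl
lemma pat2 {n : ℕ} (i j : Fin n) : pat 2 n i j ↔ (i ≤ j) := Iff.rfl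
lemma pat3 {n : ℕ} (i j : Fin n) : pat 3 n i j ↔ (i < j) := Iff.rfl
lemma pat4 {n : ℕ} (i j : Fin n) : pat 4 n i j ↔ (i ≠ j) := Iff.rfl
lemma pat5 {n : ℕ} (i j : Fin n) : pat 5 n i j ↔ True := Iff.rfl

def occF (F : BipFamily) (t : Fin 6) : Set ℕ := {n | ∃ R ∈ F n, BipIso R (pat t n)}

lemma mem_siSub_of_occ {F : BipFamily} (hph : PartnerHereditary F) (t : Fin 6)
    (hall : ∀ n, n ∈ occF F t) {n : ℕ} {R : Fin n → Fin n → Prop}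
    (hR : R ∈ F n) (hiso : BipIso R (pat t n)) : R ∈ siSub F n := by
  refine ⟨fun m => {R | R ∈ F m ∧ BipIso R (pat t m)}, ?_, ?_,
    fun m R hR => hR.1, ⟨hR, hiso⟩⟩
  · rintro n R ⟨hR, hi⟩ m f
    obtain ⟨R', hR', hiso'⟩ := hph n R hR m f
    exact ⟨R', ⟨hR', hiso'.trans (restrict_pat hi f)⟩, hiso'⟩
  · intro m
    obtain ⟨R₀, hR₀, hi₀⟩ := hall m
    exact ⟨R₀, ⟨hR₀, hi₀⟩, fun R' hR' => hi₀.trans hR'.2.symm⟩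

lemma occ_all {F : BipFamily} (hph : PartnerHereditary F) (t : Fin 6)
    (hub : ¬ BddAbove (occF F t)) (n : ℕ) : n ∈ occF F t := by
  obtain ⟨m, hm, hnm⟩ := not_bddAbove_iff.mp hub n
  obtain ⟨R, hR, hi⟩ := hm
  obtain ⟨R', hR', hiso'⟩ := hph m R hR n (Fin.castLEOrderEmb hnm.le)
  exact ⟨R', hR', hiso'.trans (restrict_pat hi _)⟩

lemma qset_bdd {F : BipFamily} (hph : PartnerHereditary F) :
    BddAbove {m : ℕ | ∃ R ∈ F m, R ∉ siSub F m ∧ IsCanonical R} := by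
  classical
  refine ⟨Finset.univ.sup (fun t : Fin 6 =>
    if BddAbove (occF F t) then sSup (occF F t) else 0), ?_⟩
  rintro m ⟨R, hR, hns, hc⟩
  obtain ⟨t, hiso⟩ := (isCanonical_iff R).mp hc
  have hbdd : BddAbove (occF F t) := by
    by_contra hub
    exact hns (mem_siSub_of_occ hph t (occ_all hph t hub) hR hiso)
  have h1 : m ≤ sSup (occF F t) := le_csSup hbdd ⟨R, hR, hiso⟩
  have h2 := Finset.le_sup (f := fun t : Fin 6 =>
    if BddAbove (occF F t) then sSup (occF F t) else 0) (Finset.mem_univ t)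
  beta_reduce at h2
  rw [if_pos hbdd] at h2
  exact h1.trans h2

/-! ### Ramsey partner lemma -/

lemma key_extract {F : BipFamily} (hph : PartnerHereditary F) {V : Type*}
    {G : SimpleGraph V} {X Y : Set V} {n n₀ : ℕ}
    {R : Fin n → Fin n → Prop} (hR : R ∈ F n) (hcut : CutHas G X Y n R)
    (hram : HasRamsey4 (2 * n₀) n) :
    ∃ R' ∈ F n₀, IsCanonical R' ∧
      (CutHas G X Y n₀ R' ∨ CutHas G Y X n₀ R') := by
  classical
  set c : Fin n → Fin n → Fin 4 := fun i j =>
    if R (min i j) (max i j) then (if R (max i j) (min i j) then 0 else 1)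
    else (if R (max i j) (min i j) then 2 else 3) with hc
  have hsymm : ∀ i j, c i j = c j i := by
    intro i j
    simp only [hc, min_comm i j, max_comm i j]
  obtain ⟨k, S, hScard, hSmono⟩ := hram c hsymm
  have hdiag : ∃ (T : Finset (Fin n)) (d : Bool), T ⊆ S ∧ T.card = n₀ ∧
      ∀ i ∈ T, R i i ↔ d = true := by
    have hsum := Finset.card_filter_add_card_filter_not
      (s := S) (p := fun i => R i i)
    by_cases hcase : n₀ ≤ (S.filter (fun i => R i i)).card
    · obtain ⟨T, hT, hTcard⟩ := Finset.exists_subset_card_eq hcase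
      exact ⟨T, true, hT.trans (Finset.filter_subset _ _), hTcard,
        fun i hi => by simp [(Finset.mem_filter.mp (hT hi)).2]⟩
    · have hcase' : n₀ ≤ (S.filter (fun i => ¬ R i i)).card := by omega
      obtain ⟨T, hT, hTcard⟩ := Finset.exists_subset_card_eq hcase'
      exact ⟨T, false, hT.trans (Finset.filter_subset _ _), hTcard,
        fun i hi => by simp [(Finset.mem_filter.mp (hT hi)).2]⟩
  obtain ⟨T, d, hTS, hTcard, hTdiag⟩ := hdiag
  set g := T.orderEmbOfFin hTcard with hg
  have hgT : ∀ i, g i ∈ S := fun i => hTS (Finset.orderEmbOfFin_mem T hTcard i)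
  have hdiagg : ∀ i : Fin n₀, R (g i) (g i) ↔ d = true :=
    fun i => hTdiag _ (Finset.orderEmbOfFin_mem T hTcard i)
  have hoff : ∀ i j : Fin n₀, i < j →
      (R (g i) (g j) ↔ (k = 0 ∨ k = 1)) ∧ (R (g j) (g i) ↔ (k = 0 ∨ k = 2)) := by
    intro i j hij
    have hgij : g i < g j := g.lt_iff_lt.mpr hij
    have h1 : c (g i) (g j) = k :=
      hSmono _ (hgT i) _ (hgT j) hgij.ne
    rw [hc] at h1
    simp only [min_eq_left hgij.le, max_eq_right hgij.le] at h1
    by_cases hp : R (g i) (g j) <;> by_cases hq : R (g j) (g i)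
    · rw [if_pos hp, if_pos hq] at h1; subst h1; simp [hp, hq]
    · rw [if_pos hp, if_neg hq] at h1; subst h1; simp [hp, hq]
    · rw [if_neg hp, if_pos hq] at h1; subst h1; simp [hp, hq]
    · rw [if_neg hp, if_neg hq] at h1; subst h1; simp [hp, hq]
  have hpat : ∃ t : Fin 6, BipIso (fun i j => R (g i) (g j)) (pat t n₀) := by
    by_cases hP : (k = 0 ∨ k = 1) <;> by_cases hQ : (k = 0 ∨ k = 2) <;> cases d
    · refine ⟨4, .of_iff fun i j => ?_⟩
      rcases lt_trichotomy i j with h | h | h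
      · rw [(hoff i j h).1]; simp [hP, pat4, h.ne]
      · subst h; rw [hdiagg i]; simp [pat4]
      · rw [(hoff j i h).2]; simp [hQ, pat4, h.ne']
    · refine ⟨5, .of_iff fun i j => ?_⟩
      rcases lt_trichotomy i j with h | h | h
      · rw [(hoff i j h).1]; simp [hP, pat5]
      · subst h; rw [hdiagg i]; simp [pat5]
      · rw [(hoff j i h).2]; simp [hQ, pat5]
    · refine ⟨3, .of_iff fun i j => ?_⟩
      rcases lt_trichotomy i j with h | h | h
      · rw [(hoff i j h).1]; simp [hP, pat3, h]
      · subst h; rw [hdiagg i]; simp [pat3]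
      · rw [(hoff j i h).2]; simp [hQ, pat3, h.not_gt]
    · refine ⟨2, .of_iff fun i j => ?_⟩
      rcases lt_trichotomy i j with h | h | h
      · rw [(hoff i j h).1]; simp [hP, pat2, h.le]
      · subst h; rw [hdiagg i]; simp [pat2]
      · rw [(hoff j i h).2]; simp [hQ, pat2, h.not_ge]
    · refine ⟨3, .of_iff_swap fun i j => ?_⟩
      rcases lt_trichotomy i j with h | h | h
      · rw [(hoff i j h).1]; simp [hP, pat3, h.not_gt]
      · subst h; rw [hdiagg i]; simp [pat3]
      · rw [(hoff j i h).2]; simp [hQ, pat3, h]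
    · refine ⟨2, .of_iff_swap fun i j => ?_⟩
      rcases lt_trichotomy i j with h | h | h
      · rw [(hoff i j h).1]; simp [hP, pat2, h.not_ge]
      · subst h; rw [hdiagg i]; simp [pat2]
      · rw [(hoff j i h).2]; simp [hQ, pat2, h.le]
    · refine ⟨0, .of_iff fun i j => ?_⟩
      rcases lt_trichotomy i j with h | h | h
      · rw [(hoff i j h).1]; simp [hP, pat0]
      · subst h; rw [hdiagg i]; simp [pat0]
      · rw [(hoff j i h).2]; simp [hQ, pat0]
    · refine ⟨1, .of_iff fun i j => ?_⟩
      rcases lt_trichotomy i j with h | h | h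
      · rw [(hoff i j h).1]; simp [hP, pat1, h.ne]
      · subst h; rw [hdiagg i]; simp [pat1]
      · rw [(hoff j i h).2]; simp [hQ, pat1, h.ne']
  obtain ⟨t, hiso⟩ := hpat
  obtain ⟨R', hR', hiso'⟩ := hph n R hR n₀ g
  exact ⟨R', hR', (isCanonical_iff R').mpr ⟨t, hiso'.trans hiso⟩,
    CutHas.of_iso hiso' (hcut.restrict g g.injective)⟩

/-- for a partner-hereditary family `F` with `F'` the union of
all si ph families contained in it, `F'`-bw(G) ≤ `F`-bw(G) ≤ g(`F'`-bw(G)),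
where `g(k) = R(2n,2n,2n,2n)` with `n = 1 + max(q, k)`. -/
theorem stmt17 {V : Type*} [Fintype V] (F : BipFamily)
    (hph : PartnerHereditary F) (G : SimpleGraph V) :
    FamBw (siSub F) G Set.univ ≤ FamBw F G Set.univ ∧
    FamBw F G Set.univ ≤
      ramsey4 (2 * (1 + max (qOf F) (FamBw (siSub F) G Set.univ))) := by
  classical
  have hAB : ∀ k, FamBwLE F G Set.univ k → FamBwLE (siSub F) G Set.univ k := by
    rintro k ⟨D, hD⟩
    exact ⟨D, fun u v huv n hn => hD u v huv n
      (by obtain ⟨R, hRm, hcc⟩ := hn; exact ⟨R, siSub_subset F n hRm, hcc⟩)⟩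
  by_cases hB : {k | FamBwLE (siSub F) G Set.univ k}.Nonempty
  · have hD' : FamBwLE (siSub F) G Set.univ (FamBw (siSub F) G Set.univ) :=
      Nat.sInf_mem hB
    obtain ⟨D, hD⟩ := hD'
    have hcardA : FamBwLE F G Set.univ (Fintype.card V) := by
      refine ⟨D, fun u v huv n hn => ?_⟩
      obtain ⟨R, hR, hcc | hcc⟩ := hn <;> obtain ⟨a, b, ha, -, -, -, -⟩ := hcc <;>
        simpa using Fintype.card_le_of_injective a ha
    have hAne : {k | FamBwLE F G Set.univ k}.Nonempty := ⟨_, hcardA⟩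
    constructor
    · exact Nat.sInf_le (hAB _ (Nat.sInf_mem hAne))
    · have hKmem : FamBwLE F G Set.univ
          (ramsey4 (2 * (1 + max (qOf F) (FamBw (siSub F) G Set.univ)))) := by
        set n₀ := 1 + max (qOf F) (FamBw (siSub F) G Set.univ) with hn₀
        refine ⟨D, fun u v huv n hn => ?_⟩
        by_contra hgt
        push_neg at hgt
        have hram : HasRamsey4 (2 * n₀) n := hasRamsey4_of_le hgt.le
        have hex : ∃ R' ∈ F n₀, IsCanonical R' ∧
            (CutHas G (D.side u v) (Set.univ \ D.side u v) n₀ R' ∨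
             CutHas G (Set.univ \ D.side u v) (D.side u v) n₀ R') := by
          obtain ⟨R, hR, hcc | hcc⟩ := hn
          · exact key_extract hph hR hcc hram
          · obtain ⟨R', h1, h2, h3⟩ := key_extract hph hR hcc hram
            exact ⟨R', h1, h2, h3.symm⟩
        obtain ⟨R', hR', hcan, hcut'⟩ := hex
        have hmax1 : qOf F ≤ max (qOf F) (FamBw (siSub F) G Set.univ) :=
          le_max_left _ _
        have hmax2 : FamBw (siSub F) G Set.univ ≤
            max (qOf F) (FamBw (siSub F) G Set.univ) := le_max_right _ _
        by_cases hmem : R' ∈ siSub F n₀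
        · have hle : n₀ ≤ FamBw (siSub F) G Set.univ :=
            hD u v huv n₀ ⟨R', hmem, hcut'⟩
          omega
        · have hq : n₀ ≤ qOf F := le_csSup (qset_bdd hph) ⟨R', hR', hmem, hcan⟩
          omega
      exact Nat.sInf_le hKmem
  · have hA : ¬ {k | FamBwLE F G Set.univ k}.Nonempty :=
      fun ⟨k, hk⟩ => hB ⟨k, hAB k hk⟩
    have e1 : FamBw (siSub F) G Set.univ = 0 := by
      rw [FamBw, Set.not_nonempty_iff_eq_empty.mp hB, Nat.sInf_empty]
    have e2 : FamBw F G Set.univ = 0 := by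
      rw [FamBw, Set.not_nonempty_iff_eq_empty.mp hA, Nat.sInf_empty]
    rw [e1, e2]
    exact ⟨le_rfl, Nat.zero_le _⟩
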